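/- Let n be even and R a natural number with n ≥ 4R + 2. Let p : (ZMod n → Bool) → ℝ be a probability distribution such that for all j, k ∈ ZMod n with cyclic distance dist(j,k) > 2R one has p({x : x j ≠ x k}) = 1/2. Then Σ_{i∈ZMod n} p({x : x i ≠ x (i+1)}) ≥ n/(2(2R+1)). -/

import Mathlib

/-!
Any two sites at cyclic distance `2R + 1` disagree with probability `1/2`, and if they disagree
then some nearest-neighbour pair in the window between them does. By the union bound each of the
`n` windows of `2R + 1` consecutive bonds carries total disagreement at least `1/2`, while
summing over all windows counts every bond exactly `2R + 1` times.
-/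

open Finset

/-- The cyclic distance between two elements of `ZMod n`. -/
def cyclicDist {n : ℕ} [NeZero n] (j k : ZMod n) : ℕ :=
  min (j - k).val (n - (j - k).val)

lemma cyclicDist_add_natCast_self {n : ℕ} [NeZero n] (j : ZMod n) {c : ℕ} (hc : c < n) :
    cyclicDist (j + (c : ZMod n)) j = min c (n - c) := by
  rw [cyclicDist, add_sub_cancel_left, ZMod.val_natCast_of_lt hc]

lemma sum_sum_range_add_natCast {G M : Type*} [AddGroupWithOne G] [Fintype G] [AddCommMonoid M]
    (f : G → M) (c : ℕ) : ∑ j, ∑ m ∈ range c, f (j + m) = c • ∑ i, f i := by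
  have hshift (m : ℕ) : ∑ j, f (j + m) = ∑ i, f i := Equiv.sum_comp (Equiv.addRight (m : G)) f
  rw [sum_comm]
  simp only [hshift, sum_const, card_range]

lemma sum_filter_le_sum_sum_filter {Ω ι β : Type*} [Fintype Ω] [AddCommMonoid β] [PartialOrder β]
    [IsOrderedAddMonoid β] {p : Ω → β} (hp : ∀ x, 0 ≤ p x) {P : Ω → Prop} [DecidablePred P]
    {Q : ι → Ω → Prop} [∀ m, DecidablePred (Q m)] {s : Finset ι}
    (hPQ : ∀ x, P x → ∃ m ∈ s, Q m x) :
    ∑ x with P x, p x ≤ ∑ m ∈ s, ∑ x with Q m x, p x := by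
  simp only [sum_filter]
  rw [sum_comm]
  refine sum_le_sum fun x _ => ?_
  have hterm : ∀ m ∈ s, 0 ≤ if Q m x then p x else 0 := fun m _ => by
    split_ifs
    exacts [hp x, le_rfl]
  split_ifs with hPx
  · obtain ⟨m, hm, hQ⟩ := hPQ x hPx
    calc p x = if Q m x then p x else 0 := (if_pos hQ).symm
      _ ≤ _ := single_le_sum hterm hm
  · exact sum_nonneg hterm

lemma exists_lt_apply_ne_apply_add_one {G α : Type*} [AddMonoidWithOne G] {x : G → α} {j : G}
    {c : ℕ} (h : x j ≠ x (j + c)) : ∃ m < c, x (j + m) ≠ x (j + m + 1) := by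
  induction c with
  | zero => simp at h
  | succ c ih =>
    by_cases hc : x j = x (j + c)
    · exact ⟨c, c.lt_succ_self, by rwa [hc, Nat.cast_succ, ← add_assoc] at h⟩
    · obtain ⟨m, hm, hne⟩ := ih hc
      exact ⟨m, hm.trans c.lt_succ_self, hne⟩

section disagreeProb

variable {G α : Type*} [Fintype (G → α)] [DecidableEq α]

def disagreeProb (p : (G → α) → ℝ) (j k : G) : ℝ :=
  ∑ x with x j ≠ x k, p x

lemma disagreeProb_comm (p : (G → α) → ℝ) (j k : G) : disagreeProb p j k = disagreeProb p k j := by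
  simp only [disagreeProb, ne_comm]

lemma disagreeProb_le_sum_range [AddMonoidWithOne G] {p : (G → α) → ℝ} (hp : ∀ x, 0 ≤ p x)
    (j : G) (c : ℕ) :
    disagreeProb p j (j + c) ≤ ∑ m ∈ range c, disagreeProb p (j + m) (j + m + 1) :=
  sum_filter_le_sum_sum_filter hp fun _ hx =>
    let ⟨m, hm, hne⟩ := exists_lt_apply_ne_apply_add_one hx
    ⟨m, mem_range.mpr hm, hne⟩

end disagreeProb

theorem stmt6 (n R : ℕ) [NeZero n] (hnR : 4 * R + 2 ≤ n)
    (p : ((ZMod n) → Bool) → ℝ)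
    (hp0 : ∀ x, 0 ≤ p x)
    (hfar : ∀ j k : ZMod n, 2 * R < cyclicDist j k →
      ∑ x ∈ Finset.univ.filter (fun x : (ZMod n) → Bool => x j ≠ x k), p x = 1 / 2) :
    (n : ℝ) / (2 * (2 * R + 1)) ≤
      ∑ i : ZMod n,
        ∑ x ∈ Finset.univ.filter (fun x : (ZMod n) → Bool => x i ≠ x (i + 1)), p x := by
  set c := 2 * R + 1
  have window (j : ZMod n) : (1 : ℝ) / 2 ≤ ∑ m ∈ range c, disagreeProb p (j + m) (j + m + 1) := by
    have hdist : 2 * R < cyclicDist (j + (c : ZMod n)) j := by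
      rw [cyclicDist_add_natCast_self j (by omega)]
      omega
    calc (1 : ℝ) / 2 = disagreeProb p j (j + c) := by
          rw [disagreeProb_comm]
          exact (hfar _ _ hdist).symm
      _ ≤ _ := disagreeProb_le_sum_range hp0 j c
  have total : (n : ℝ) * (1 / 2) ≤ c * ∑ i, disagreeProb p i (i + 1) := by
    calc (n : ℝ) * (1 / 2) = ∑ _j : ZMod n, (1 : ℝ) / 2 := by simp
      _ ≤ ∑ j : ZMod n, ∑ m ∈ range c, disagreeProb p (j + m) (j + m + 1) :=
          sum_le_sum fun j _ => window j
      _ = c * ∑ i, disagreeProb p i (i + 1) := by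
          rw [sum_sum_range_add_natCast (fun i => disagreeProb p i (i + 1)), nsmul_eq_mul]
  change (n : ℝ) / (2 * (2 * R + 1)) ≤ ∑ i, disagreeProb p i (i + 1)
  rw [div_le_iff₀ (by positivity)]
  simp only [c, Nat.cast_add, Nat.cast_mul, Nat.cast_ofNat, Nat.cast_one] at total
  linarith
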